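/- arXiv:1506.05539 — 3 statements merged into one kernel-verified Lean document; each statement's English description precedes it below -/
import Mathlib

section
/- Let H = H_0 ∪ H_1 and suppose the functional T satisfies T(θ) = μ_0 for all θ ∈ H_0 and T(θ) = μ_1 for all θ ∈ H_1. Then for any prior probability distributions π_{H_0} on H_0 and π_{H_1} on H_1, and for any confidence interval CI_α(T, Z) ∈ I_α(T, H), we have sup_{θ∈H} E_θ L(CI_α(T, Z)) ≥ sup_{θ∈H_0} E_θ L(CI_α(T, Z)) ≥ |μ_1 − μ_0| · (1 − 2α − TV(f_{π_{H_1}}, f_{π_{H_0}}))_+, where x_+ = max{x, 0}. -/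
open MeasureTheory
open scoped ENNReal

/-!
Average the model over each prior: the mixtures `Q₀ = f_{π₀} ν` and `Q₁ = f_{π₁} ν` are
probability measures under which the interval still covers `μ₀`, resp. `μ₁`, with probability
at least `1 - α`. Passing from `Q₁` to `Q₀` costs at most the total variation distance, so under
`Q₀` the interval covers both points with probability at least `1 - 2α - TV`, and on that event
its length is at least `|μ₁ - μ₀|`. Finally `E_{Q₀} L` is a `π₀`-average of `E_θ L` over
`θ ∈ H₀`, hence at most their supremum.
-/

def coverageEvent {Z : Type*} (l u : Z → ℝ) (t : ℝ) : Set Z := {z | l z ≤ t ∧ t ≤ u z}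

section CoverageEvent

variable {Z : Type*} {l u : Z → ℝ}

theorem measurableSet_coverageEvent [MeasurableSpace Z] (hl : Measurable l) (hu : Measurable u)
    (t : ℝ) :
    MeasurableSet (coverageEvent l u t) :=
  (measurableSet_le hl measurable_const).inter (measurableSet_le measurable_const hu)

theorem abs_sub_le_sub_of_mem_coverageEvent {s t : ℝ} {z : Z}
    (hs : z ∈ coverageEvent l u s) (ht : z ∈ coverageEvent l u t) : |t - s| ≤ u z - l z := by
  obtain ⟨hls, hsu⟩ := hs
  obtain ⟨hlt, htu⟩ := ht
  rw [abs_sub_le_iff]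
  constructor <;> linarith

theorem ofReal_abs_sub_mul_le_lintegral [MeasurableSpace Z] (Q : Measure Z) (hl : Measurable l)
    (hu : Measurable u) (s t : ℝ) :
    ENNReal.ofReal |t - s| * Q (coverageEvent l u s ∩ coverageEvent l u t) ≤
      ∫⁻ z, ENNReal.ofReal (u z - l z) ∂Q :=
  calc ENNReal.ofReal |t - s| * Q (coverageEvent l u s ∩ coverageEvent l u t)
      ≤ ENNReal.ofReal |t - s| * Q {z | ENNReal.ofReal |t - s| ≤ ENNReal.ofReal (u z - l z)} := by
        gcongr
        intro z ⟨hs, ht⟩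
        exact ENNReal.ofReal_le_ofReal (abs_sub_le_sub_of_mem_coverageEvent hs ht)
    _ ≤ ∫⁻ z, ENNReal.ofReal (u z - l z) ∂Q :=
        mul_meas_ge_le_lintegral₀ (hu.sub hl).ennreal_ofReal.aemeasurable _

end CoverageEvent

theorem ofReal_sub_le_measure_inter {Z : Type*} [MeasurableSpace Z] {Q₀ Q₁ : Measure Z}
    [IsProbabilityMeasure Q₁] {A B : Set Z} (hB : MeasurableSet B) {α δ : ℝ} (hα : 0 ≤ α)
    (hδ : 0 ≤ δ) (hQ₀A : ENNReal.ofReal (1 - α) ≤ Q₀ A) (hQ₁B : ENNReal.ofReal (1 - α) ≤ Q₁ B)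
    (hQ₀Q₁ : Q₀ Bᶜ ≤ Q₁ Bᶜ + ENNReal.ofReal δ) :
    ENNReal.ofReal (1 - 2 * α - δ) ≤ Q₀ (A ∩ B) := by
  have hQ₁Bc : Q₁ Bᶜ ≤ ENNReal.ofReal α := by
    rw [prob_compl_eq_one_sub hB, tsub_le_iff_right]
    calc (1 : ℝ≥0∞) = ENNReal.ofReal (α + (1 - α)) := by norm_num
      _ ≤ ENNReal.ofReal α + ENNReal.ofReal (1 - α) := ENNReal.ofReal_add_le
      _ ≤ ENNReal.ofReal α + Q₁ B := by gcongr
  calc ENNReal.ofReal (1 - 2 * α - δ)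
      = ENNReal.ofReal (1 - α) - (ENNReal.ofReal α + ENNReal.ofReal δ) := by
        rw [← ENNReal.ofReal_add hα hδ, ← ENNReal.ofReal_sub _ (add_nonneg hα hδ)]
        ring_nf
    _ ≤ Q₀ A - Q₀ Bᶜ := by gcongr; exact hQ₀Q₁.trans (by gcongr)
    _ ≤ Q₀ (A ∩ B) := by
        rw [tsub_le_iff_right]
        exact (measure_le_inter_add_sdiff Q₀ A B).trans
          (by gcongr; exact Set.sdiff_subset_compl A B)

theorem withDensity_ofReal_apply_le_add_integral_abs_sub {Z : Type*} [MeasurableSpace Z]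
    {ν : Measure Z} {g₀ g₁ : Z → ℝ} (h₀ : Integrable g₀ ν) (h₁ : Integrable g₁ ν) {s : Set Z}
    (hs : MeasurableSet s) :
    ν.withDensity (fun z => ENNReal.ofReal (g₀ z)) s ≤
      ν.withDensity (fun z => ENNReal.ofReal (g₁ z)) s +
        ENNReal.ofReal (∫ z, |g₁ z - g₀ z| ∂ν) := by
  have hdiff : Integrable (fun z => |g₁ z - g₀ z|) ν := (h₁.sub h₀).abs
  rw [withDensity_apply _ hs, withDensity_apply _ hs,
    ofReal_integral_eq_lintegral_ofReal hdiff (ae_of_all _ fun _ => abs_nonneg _)]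
  calc ∫⁻ z in s, ENNReal.ofReal (g₀ z) ∂ν
      ≤ ∫⁻ z in s, ENNReal.ofReal (g₁ z) + ENNReal.ofReal |g₁ z - g₀ z| ∂ν :=
        lintegral_mono fun z => (ENNReal.ofReal_le_ofReal
          (by linarith [neg_abs_le (g₁ z - g₀ z)])).trans ENNReal.ofReal_add_le
    _ = ∫⁻ z in s, ENNReal.ofReal (g₁ z) ∂ν + ∫⁻ z in s, ENNReal.ofReal |g₁ z - g₀ z| ∂ν :=
        lintegral_add_left' h₁.aemeasurable.ennreal_ofReal.restrict _
    _ ≤ ∫⁻ z in s, ENNReal.ofReal (g₁ z) ∂ν + ∫⁻ z, ENNReal.ofReal |g₁ z - g₀ z| ∂ν := by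
        gcongr
        exact Measure.restrict_le_self

section Mixture

variable {H Z : Type*} [MeasurableSpace H] [MeasurableSpace Z] {ν : Measure Z} [SFinite ν]
  {π : Measure H}

theorem le_lintegral_of_forall_mem [IsProbabilityMeasure π] {S : Set H} (hS : π Sᶜ = 0)
    {F : H → ℝ≥0∞} {c : ℝ≥0∞} (h : ∀ θ ∈ S, c ≤ F θ) : c ≤ ∫⁻ θ, F θ ∂π :=
  calc c = ∫⁻ _, c ∂π := by simp
    _ ≤ ∫⁻ θ, F θ ∂π := lintegral_mono_ae (Filter.mem_of_superset (mem_ae_iff.2 hS) h)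

theorem lintegral_le_of_forall_mem [IsProbabilityMeasure π] {S : Set H} (hS : π Sᶜ = 0)
    {F : H → ℝ≥0∞} {c : ℝ≥0∞} (h : ∀ θ ∈ S, F θ ≤ c) : ∫⁻ θ, F θ ∂π ≤ c :=
  calc ∫⁻ θ, F θ ∂π ≤ ∫⁻ _, c ∂π := lintegral_mono_ae (Filter.mem_of_superset (mem_ae_iff.2 hS) h)
    _ = c := by simp

theorem lintegral_withDensity_lintegral [SFinite π] {g : H → Z → ℝ≥0∞}
    (hg : Measurable (Function.uncurry g)) {h : Z → ℝ≥0∞} (hh : Measurable h) :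
    ∫⁻ z, h z ∂(ν.withDensity fun z => ∫⁻ θ, g θ z ∂π) =
      ∫⁻ θ, ∫⁻ z, h z ∂(ν.withDensity (g θ)) ∂π :=
  calc ∫⁻ z, h z ∂(ν.withDensity fun z => ∫⁻ θ, g θ z ∂π)
      = ∫⁻ z, ∫⁻ θ, g θ z * h z ∂π ∂ν := by
        rw [lintegral_withDensity_eq_lintegral_mul ν hg.lintegral_prod_left hh]
        exact lintegral_congr fun z =>
          (lintegral_mul_const _ (hg.comp measurable_prodMk_right)).symm
    _ = ∫⁻ θ, ∫⁻ z, g θ z * h z ∂ν ∂π :=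
        (lintegral_lintegral_swap (hg.mul (hh.comp measurable_snd)).aemeasurable).symm
    _ = ∫⁻ θ, ∫⁻ z, h z ∂(ν.withDensity (g θ)) ∂π :=
        lintegral_congr fun θ =>
          (lintegral_withDensity_eq_lintegral_mul ν (hg.comp measurable_prodMk_left) hh).symm

variable [IsProbabilityMeasure π] {f : H → Z → ℝ} (hf : Measurable (Function.uncurry f))
  (hP : ∀ θ, IsProbabilityMeasure (ν.withDensity fun z => ENNReal.ofReal (f θ z)))
include hf hP

theorem lintegral_lintegral_ofReal_eq_one :
    ∫⁻ z, ∫⁻ θ, ENNReal.ofReal (f θ z) ∂π ∂ν = 1 := by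
  have h := lintegral_withDensity_lintegral (ν := ν) (π := π)
    (g := fun θ z => ENNReal.ofReal (f θ z)) hf.ennreal_ofReal measurable_one
  simp only [Pi.one_apply, lintegral_one, (hP _).measure_univ, measure_univ] at h
  rwa [withDensity_apply _ MeasurableSet.univ, Measure.restrict_univ] at h

variable (hf₀ : ∀ θ z, 0 ≤ f θ z)
include hf₀

theorem ofReal_integral_ae_eq_lintegral :
    ∀ᵐ z ∂ν, ENNReal.ofReal (∫ θ, f θ z ∂π) = ∫⁻ θ, ENNReal.ofReal (f θ z) ∂π := by
  have hfin : ∀ᵐ z ∂ν, ∫⁻ θ, ENNReal.ofReal (f θ z) ∂π < ⊤ :=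
    ae_lt_top hf.ennreal_ofReal.lintegral_prod_left
      (by rw [lintegral_lintegral_ofReal_eq_one hf hP]; exact ENNReal.one_ne_top)
  filter_upwards [hfin] with z hz
  rw [integral_eq_lintegral_of_nonneg_ae (ae_of_all _ (hf₀ · z))
    (hf.comp measurable_prodMk_right).aestronglyMeasurable, ENNReal.ofReal_toReal hz.ne]

theorem integrable_integral : Integrable (fun z => ∫ θ, f θ z ∂π) ν := by
  refine ⟨hf.stronglyMeasurable.integral_prod_left.aestronglyMeasurable,
    (hasFiniteIntegral_iff_ofReal (ae_of_all _ fun z => integral_nonneg (hf₀ · z))).2 ?_⟩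
  rw [lintegral_congr_ae (ofReal_integral_ae_eq_lintegral hf hP hf₀),
    lintegral_lintegral_ofReal_eq_one hf hP]
  exact ENNReal.one_lt_top

theorem lintegral_withDensity_integral {h : Z → ℝ≥0∞} (hh : Measurable h) :
    ∫⁻ z, h z ∂(ν.withDensity fun z => ENNReal.ofReal (∫ θ, f θ z ∂π)) =
      ∫⁻ θ, ∫⁻ z, h z ∂(ν.withDensity fun z => ENNReal.ofReal (f θ z)) ∂π := by
  rw [withDensity_congr_ae (ofReal_integral_ae_eq_lintegral hf hP hf₀)]
  exact lintegral_withDensity_lintegral (g := fun θ z => ENNReal.ofReal (f θ z))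
    hf.ennreal_ofReal hh

theorem withDensity_integral_apply {s : Set Z} (hs : MeasurableSet s) :
    ν.withDensity (fun z => ENNReal.ofReal (∫ θ, f θ z ∂π)) s =
      ∫⁻ θ, ν.withDensity (fun z => ENNReal.ofReal (f θ z)) s ∂π := by
  simpa only [lintegral_indicator_one hs] using
    lintegral_withDensity_integral hf hP hf₀ (measurable_one.indicator hs)

theorem isProbabilityMeasure_withDensity_integral :
    IsProbabilityMeasure (ν.withDensity fun z => ENNReal.ofReal (∫ θ, f θ z ∂π)) :=
  ⟨by simp [withDensity_integral_apply hf hP hf₀ MeasurableSet.univ, (hP _).measure_univ]⟩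

theorem le_withDensity_integral_apply {S : Set H} (hS : π Sᶜ = 0) {s : Set Z}
    (hs : MeasurableSet s) {c : ℝ≥0∞}
    (h : ∀ θ ∈ S, c ≤ ν.withDensity (fun z => ENNReal.ofReal (f θ z)) s) :
    c ≤ ν.withDensity (fun z => ENNReal.ofReal (∫ θ, f θ z ∂π)) s := by
  rw [withDensity_integral_apply hf hP hf₀ hs]
  exact le_lintegral_of_forall_mem hS h

end Mixture

theorem two_point_lower_bound_general
    {Zsp H : Type*} [MeasurableSpace Zsp] [MeasurableSpace H]
    (ν : Measure Zsp) [SigmaFinite ν]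
    (f : H → Zsp → ℝ)
    (hf_meas : Measurable (Function.uncurry f))
    (hf_nonneg : ∀ θ z, 0 ≤ f θ z)
    (hf_prob : ∀ θ, IsProbabilityMeasure
      (ν.withDensity fun z => ENNReal.ofReal (f θ z)))
    (H₀ H₁ : Set H)
    (T : H → ℝ) (μ₀ μ₁ : ℝ)
    (hT₀ : ∀ θ ∈ H₀, T θ = μ₀) (hT₁ : ∀ θ ∈ H₁, T θ = μ₁)
    (π₀ π₁ : Measure H) [IsProbabilityMeasure π₀] [IsProbabilityMeasure π₁]
    (hπ₀ : π₀ H₀ᶜ = 0) (hπ₁ : π₁ H₁ᶜ = 0)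
    (α : ℝ) (hα₁ : 0 < α)
    (l u : Zsp → ℝ) (hl : Measurable l) (hu : Measurable u)
    (hcov : ∀ θ : H, ENNReal.ofReal (1 - α) ≤
      (ν.withDensity fun z => ENNReal.ofReal (f θ z)) {z | l z ≤ T θ ∧ T θ ≤ u z}) :
    ENNReal.ofReal (|μ₁ - μ₀| *
        (1 - 2 * α - ∫ z, |(∫ θ, f θ z ∂π₁) - (∫ θ, f θ z ∂π₀)| ∂ν)) ≤
      (⨆ θ ∈ H₀, ∫⁻ z, ENNReal.ofReal (u z - l z)
          ∂(ν.withDensity fun z => ENNReal.ofReal (f θ z))) ∧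
    (⨆ θ ∈ H₀, ∫⁻ z, ENNReal.ofReal (u z - l z)
        ∂(ν.withDensity fun z => ENNReal.ofReal (f θ z))) ≤
      ⨆ θ : H, ∫⁻ z, ENNReal.ofReal (u z - l z)
          ∂(ν.withDensity fun z => ENNReal.ofReal (f θ z)) := by
  set L : Zsp → ℝ≥0∞ := fun z => ENNReal.ofReal (u z - l z)
  set P : H → Measure Zsp := fun θ => ν.withDensity fun z => ENNReal.ofReal (f θ z)
  set Q₀ := ν.withDensity fun z => ENNReal.ofReal (∫ θ, f θ z ∂π₀)
  have := isProbabilityMeasure_withDensity_integral hf_meas hf_prob hf_nonneg (π := π₁)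
  have hcov₀ : ENNReal.ofReal (1 - α) ≤ Q₀ (coverageEvent l u μ₀) :=
    le_withDensity_integral_apply hf_meas hf_prob hf_nonneg hπ₀
      (measurableSet_coverageEvent hl hu μ₀) fun θ hθ => hT₀ θ hθ ▸ hcov θ
  have hcov₁ := le_withDensity_integral_apply hf_meas hf_prob hf_nonneg hπ₁
      (measurableSet_coverageEvent hl hu μ₁) fun θ hθ => hT₁ θ hθ ▸ hcov θ
  have hTV := withDensity_ofReal_apply_le_add_integral_abs_sub
    (integrable_integral hf_meas hf_prob hf_nonneg (π := π₀))
    (integrable_integral hf_meas hf_prob hf_nonneg (π := π₁))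
    (measurableSet_coverageEvent hl hu μ₁).compl
  refine ⟨?_, iSup₂_le fun θ _ => le_iSup (fun θ => ∫⁻ z, L z ∂P θ) θ⟩
  calc _ = ENNReal.ofReal |μ₁ - μ₀| *
        ENNReal.ofReal (1 - 2 * α - ∫ z, |(∫ θ, f θ z ∂π₁) - (∫ θ, f θ z ∂π₀)| ∂ν) :=
        ENNReal.ofReal_mul (abs_nonneg _)
    _ ≤ ENNReal.ofReal |μ₁ - μ₀| * Q₀ (coverageEvent l u μ₀ ∩ coverageEvent l u μ₁) := by
        gcongr
        exact ofReal_sub_le_measure_inter (measurableSet_coverageEvent hl hu μ₁) hα₁.le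
          (integral_nonneg fun _ => abs_nonneg _) hcov₀ hcov₁ hTV
    _ ≤ ∫⁻ z, L z ∂Q₀ := ofReal_abs_sub_mul_le_lintegral Q₀ hl hu μ₀ μ₁
    _ = ∫⁻ θ, ∫⁻ z, L z ∂P θ ∂π₀ :=
        lintegral_withDensity_integral hf_meas hf_prob hf_nonneg (hu.sub hl).ennreal_ofReal
    _ ≤ ⨆ θ ∈ H₀, ∫⁻ z, L z ∂P θ :=
        lintegral_le_of_forall_mem hπ₀ fun θ hθ => le_iSup₂ (f := fun θ _ => ∫⁻ z, L z ∂P θ) θ hθ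

/-- **Lemma 1 (two-point adaptation lower bound).**
Suppose `Z ~ P_θ = f_θ dν` for `θ` in the parameter space `H = H₀ ∪ H₁`, and the
functional `T` satisfies `T(θ) = μ₀` on `H₀` and `T(θ) = μ₁` on `H₁`.  Then for any
priors `π₀` supported on `H₀` and `π₁` supported on `H₁`, and any `(1-α)`-level
confidence interval `[l(Z), u(Z)]` for `T` over `H`,
`sup_{θ ∈ H} E_θ L ≥ sup_{θ ∈ H₀} E_θ L ≥ |μ₁ - μ₀| (1 - 2α - TV(f_{π₁}, f_{π₀}))₊`,
where `f_π(z) = ∫ f_θ(z) π(dθ)` and `TV(f₁, f₀) = ∫ |f₁(z) - f₀(z)| dν(z)`. -/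
theorem two_point_lower_bound
    {Zsp H : Type*} [MeasurableSpace Zsp] [MeasurableSpace H]
    (ν : Measure Zsp) [SigmaFinite ν]
    (f : H → Zsp → ℝ)
    (hf_meas : Measurable (Function.uncurry f))
    (hf_nonneg : ∀ θ z, 0 ≤ f θ z)
    (hf_prob : ∀ θ, IsProbabilityMeasure
      (ν.withDensity fun z => ENNReal.ofReal (f θ z)))
    (H₀ H₁ : Set H) (hH : H₀ ∪ H₁ = Set.univ)
    (T : H → ℝ) (μ₀ μ₁ : ℝ)
    (hT₀ : ∀ θ ∈ H₀, T θ = μ₀) (hT₁ : ∀ θ ∈ H₁, T θ = μ₁)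
    (π₀ π₁ : Measure H) [IsProbabilityMeasure π₀] [IsProbabilityMeasure π₁]
    (hπ₀ : π₀ H₀ᶜ = 0) (hπ₁ : π₁ H₁ᶜ = 0)
    (α : ℝ) (hα₁ : 0 < α) (hα₂ : α < 1)
    (l u : Zsp → ℝ) (hl : Measurable l) (hu : Measurable u) (hlu : ∀ z, l z ≤ u z)
    (hcov : ∀ θ : H, ENNReal.ofReal (1 - α) ≤
      (ν.withDensity fun z => ENNReal.ofReal (f θ z)) {z | l z ≤ T θ ∧ T θ ≤ u z}) :
    ENNReal.ofReal (|μ₁ - μ₀| *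
        (1 - 2 * α - ∫ z, |(∫ θ, f θ z ∂π₁) - (∫ θ, f θ z ∂π₀)| ∂ν)) ≤
      (⨆ θ ∈ H₀, ∫⁻ z, ENNReal.ofReal (u z - l z)
          ∂(ν.withDensity fun z => ENNReal.ofReal (f θ z))) ∧
    (⨆ θ ∈ H₀, ∫⁻ z, ENNReal.ofReal (u z - l z)
        ∂(ν.withDensity fun z => ENNReal.ofReal (f θ z))) ≤
      ⨆ θ : H, ∫⁻ z, ENNReal.ofReal (u z - l z)
          ∂(ν.withDensity fun z => ENNReal.ofReal (f θ z)) :=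
  two_point_lower_bound_general ν f hf_meas hf_nonneg hf_prob H₀ H₁ T μ₀ μ₁ hT₀ hT₁ π₀ π₁ hπ₀ hπ₁ α
    hα₁ l u hl hu hcov
end

section
/- Let 1 ≤ k < p be integers and let J be a Hypergeometric(p, k, k) random variable, i.e., P(J = j) = C(k, j)·C(p−k, k−j)/C(p, k) for 0 ≤ j ≤ k. Then for every t ≥ 0, E exp(tJ) = Σ_{j=0}^{k} [C(k, j)·C(p−k, k−j)/C(p, k)]·e^{tj} ≤ e^{k²/(p−k)} · (1 − k/p + (k/p)·e^{t})^{k}. -/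
open Finset

private lemma natD (p k j : ℕ) (hj : j ≤ k) :
    (p - k).choose (k - j) * k.factorial ≤ (p - k) ^ (k - j) * k ^ j := by
  calc (p - k).choose (k - j) * k.factorial
      = (p - k).choose (k - j) * ((k - j).factorial * k.descFactorial j) := by
        rw [Nat.factorial_mul_descFactorial hj]
    _ = ((k - j).factorial * (p - k).choose (k - j)) * k.descFactorial j := by ring
    _ = (p - k).descFactorial (k - j) * k.descFactorial j := by
        rw [← Nat.descFactorial_eq_factorial_mul_choose]
    _ ≤ (p - k) ^ (k - j) * k ^ j :=
        Nat.mul_le_mul (Nat.descFactorial_le_pow _ _) (Nat.descFactorial_le_pow _ _)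

private lemma realC (p k : ℕ) (hkp : k < p) :
    (p : ℝ) ^ k ≤ Real.exp ((k : ℝ) ^ 2 / ((p : ℝ) - k)) * (p.descFactorial k : ℝ) := by
  have hpk : (0 : ℝ) < (p : ℝ) - k := by
    have := (Nat.cast_lt (α := ℝ)).2 hkp
    linarith
  have hdesc : (p.descFactorial k : ℝ) = ∏ i ∈ range k, ((p : ℝ) - i) := by
    rw [Nat.descFactorial_eq_prod_range, Nat.cast_prod]
    refine Finset.prod_congr rfl fun i hi => ?_
    have : i ≤ p := le_of_lt (lt_trans (mem_range.1 hi) hkp)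
    push_cast [Nat.cast_sub this]
    ring
  have key : ∀ i ∈ range k, (p : ℝ) ≤ Real.exp ((i : ℝ) / ((p : ℝ) - k)) * ((p : ℝ) - i) := by
    intro i hi
    have hik : (i : ℝ) ≤ (k : ℝ) := by exact_mod_cast (mem_range.1 hi).le
    have hpi : (0 : ℝ) < (p : ℝ) - i := by linarith
    have h1 : (i : ℝ) / ((p : ℝ) - k) + 1 ≤ Real.exp ((i : ℝ) / ((p : ℝ) - k)) :=
      Real.add_one_le_exp _
    have h2 : (p : ℝ) ≤ ((i : ℝ) / ((p : ℝ) - k) + 1) * ((p : ℝ) - i) := by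
      rw [div_add' _ _ _ (ne_of_gt hpk), div_mul_eq_mul_div, le_div_iff₀ hpk]
      have hi0 : (0 : ℝ) ≤ (i : ℝ) := Nat.cast_nonneg i
      nlinarith
    calc (p : ℝ) ≤ ((i : ℝ) / ((p : ℝ) - k) + 1) * ((p : ℝ) - i) := h2
      _ ≤ Real.exp ((i : ℝ) / ((p : ℝ) - k)) * ((p : ℝ) - i) := by
          exact mul_le_mul_of_nonneg_right h1 hpi.le
  calc (p : ℝ) ^ k = ∏ i ∈ range k, (p : ℝ) := by rw [Finset.prod_const, Finset.card_range]
    _ ≤ ∏ i ∈ range k, Real.exp ((i : ℝ) / ((p : ℝ) - k)) * ((p : ℝ) - i) := by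
        refine Finset.prod_le_prod (fun i _ => Nat.cast_nonneg p) key
    _ = (∏ i ∈ range k, Real.exp ((i : ℝ) / ((p : ℝ) - k))) * ∏ i ∈ range k, ((p : ℝ) - i) := by
        rw [Finset.prod_mul_distrib]
    _ = Real.exp (∑ i ∈ range k, (i : ℝ) / ((p : ℝ) - k)) * (p.descFactorial k : ℝ) := by
        rw [Real.exp_sum, hdesc]
    _ ≤ Real.exp ((k : ℝ) ^ 2 / ((p : ℝ) - k)) * (p.descFactorial k : ℝ) := by
        refine mul_le_mul_of_nonneg_right (Real.exp_le_exp.2 ?_) (Nat.cast_nonneg _)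
        rw [← Finset.sum_div, div_le_div_iff₀ hpk hpk]
        have : ∑ i ∈ range k, (i : ℝ) ≤ ∑ i ∈ range k, (k : ℝ) := by
          refine Finset.sum_le_sum fun i hi => ?_
          exact_mod_cast (mem_range.1 hi).le
        simp only [Finset.sum_const, Finset.card_range, nsmul_eq_mul] at this
        nlinarith [hpk]

/-- **Lemma 3 (MGF bound for the hypergeometric distribution).**
Let `J ~ Hypergeometric(p, k, k)`, i.e. `P(J = j) = C(k,j) C(p-k, k-j) / C(p,k)`.
Then for every `t ≥ 0`,
`E exp(tJ) = ∑_{j=0}^{k} [C(k,j) C(p-k, k-j) / C(p,k)] e^{tj}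
  ≤ e^{k²/(p-k)} (1 - k/p + (k/p) e^t)^k`. -/
theorem hypergeometric_mgf_bound
    (p k : ℕ) (hk : 1 ≤ k) (hkp : k < p) (t : ℝ) (ht : 0 ≤ t) :
    ∑ j ∈ Finset.range (k + 1),
        ((k.choose j : ℝ) * ((p - k).choose (k - j) : ℝ) / (p.choose k : ℝ)) *
          Real.exp (t * j) ≤
      Real.exp ((k : ℝ) ^ 2 / ((p : ℝ) - k)) *
        (1 - (k : ℝ) / p + ((k : ℝ) / p) * Real.exp t) ^ k := by
  have hp0 : (0 : ℝ) < (p : ℝ) := by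
    have : 0 < p := lt_trans (Nat.lt_of_lt_of_le Nat.zero_lt_one hk) hkp
    exact_mod_cast this
  have hpk : (0 : ℝ) < (p : ℝ) - k := by
    have := (Nat.cast_lt (α := ℝ)).2 hkp
    linarith
  have hchoose : (0 : ℝ) < (p.choose k : ℝ) := by
    exact_mod_cast Nat.choose_pos hkp.le
  have hcast : ((p - k : ℕ) : ℝ) = (p : ℝ) - k := by
    push_cast [Nat.cast_sub hkp.le]; ring
  set K := Real.exp ((k : ℝ) ^ 2 / ((p : ℝ) - k)) with hK
  have hK0 : 0 < K := Real.exp_pos _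
  set x := ((k : ℝ) / p) * Real.exp t with hx
  set y := 1 - (k : ℝ) / p with hy
  have hyy : y = ((p : ℝ) - k) / p := by rw [hy]; field_simp
  have term : ∀ j ∈ range (k + 1),
      ((k.choose j : ℝ) * ((p - k).choose (k - j) : ℝ) / (p.choose k : ℝ)) *
          Real.exp (t * j) ≤ K * (x ^ j * y ^ (k - j) * (k.choose j : ℝ)) := by
    intro j hj
    have hjk : j ≤ k := Nat.lt_succ_iff.1 (mem_range.1 hj)
    have hE : Real.exp (t * j) = (Real.exp t) ^ j := by
      rw [mul_comm, Real.exp_nat_mul]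
    set Cj := (k.choose j : ℝ) with hCj
    set D := (((p - k).choose (k - j) : ℕ) : ℝ) with hD
    set C := (p.choose k : ℝ) with hC
    have hCj0 : 0 ≤ Cj := Nat.cast_nonneg _
    have hD0 : 0 ≤ D := Nat.cast_nonneg _
    have hp' : (0 : ℝ) < (p : ℝ) ^ k := by positivity
    -- the cleared inequality
    have h1 : (p : ℝ) ^ k ≤ K * (p.descFactorial k : ℝ) := by
      rw [hK]; exact realC p k hkp
    have h2 : D * (k.factorial : ℝ) ≤ ((p : ℝ) - k) ^ (k - j) * (k : ℝ) ^ j := by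
      rw [hD, ← hcast]
      exact_mod_cast natD p k j hjk
    have hdf : (p.descFactorial k : ℝ) = (k.factorial : ℝ) * C := by
      rw [hC]; exact_mod_cast Nat.descFactorial_eq_factorial_mul_choose p k
    have hclear : Cj * D * (p : ℝ) ^ k ≤
        K * Cj * ((k : ℝ) ^ j * ((p : ℝ) - k) ^ (k - j)) * C := by
      have e1 : Cj * D * (p : ℝ) ^ k ≤ Cj * D * (K * ((k.factorial : ℝ) * C)) := by
        rw [← hdf]
        exact mul_le_mul_of_nonneg_left h1 (by positivity)
      have e2 : (K * Cj * C) * (D * (k.factorial : ℝ)) ≤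
          (K * Cj * C) * (((p : ℝ) - k) ^ (k - j) * (k : ℝ) ^ j) := by
        refine mul_le_mul_of_nonneg_left h2 (by positivity)
      nlinarith [e1, e2]
    have hpmf : Cj * D / C ≤ K * (Cj * (((k : ℝ) / p) ^ j * (((p : ℝ) - k) / p) ^ (k - j))) := by
      have hN : ((k : ℝ) / p) ^ j * (((p : ℝ) - k) / p) ^ (k - j) =
          ((k : ℝ) ^ j * ((p : ℝ) - k) ^ (k - j)) / (p : ℝ) ^ k := by
        rw [div_pow, div_pow, div_mul_div_comm, ← pow_add, Nat.add_sub_cancel' hjk]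
      rw [hN, div_le_iff₀ hchoose,
        show K * (Cj * ((k : ℝ) ^ j * ((p : ℝ) - k) ^ (k - j) / (p : ℝ) ^ k)) * C =
          K * Cj * ((k : ℝ) ^ j * ((p : ℝ) - k) ^ (k - j)) * C / (p : ℝ) ^ k from by ring,
        le_div_iff₀ hp']
      exact hclear
    calc Cj * D / C * Real.exp (t * j)
        = Cj * D / C * (Real.exp t) ^ j := by rw [hE]
      _ ≤ (K * (Cj * (((k : ℝ) / p) ^ j * (((p : ℝ) - k) / p) ^ (k - j)))) * (Real.exp t) ^ j :=
          mul_le_mul_of_nonneg_right hpmf (by positivity)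
      _ = K * (x ^ j * y ^ (k - j) * Cj) := by
          rw [hx, hyy, mul_pow]; ring
  calc ∑ j ∈ range (k + 1),
        ((k.choose j : ℝ) * ((p - k).choose (k - j) : ℝ) / (p.choose k : ℝ)) *
          Real.exp (t * j)
      ≤ ∑ j ∈ range (k + 1), K * (x ^ j * y ^ (k - j) * (k.choose j : ℝ)) :=
        Finset.sum_le_sum term
    _ = K * ∑ j ∈ range (k + 1), x ^ j * y ^ (k - j) * (k.choose j : ℝ) := by
        rw [← Finset.mul_sum]
    _ = K * (x + y) ^ k := by rw [add_pow]
    _ = K * (y + x) ^ k := by rw [add_comm x y]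
end

section
/- Assume the event inequalities (G_1), (G_2), (G_3), (G_4), (G_5), (S_1), (S_2), (B_1) hold, that 0 < σ ≤ M_2, and that k ≤ c_*·n/log p for a sufficiently small constant c_* > 0. Then there exist a constant C > 0 and an integer p_0 (not depending on the particular X, y, β, ξ) such that for all p ≥ p_0: ρ_1(k) ≤ C‖ξ‖_2·(1/√n + k·log p/n)·σ ≤ ‖ξ‖_2·log p·(1/√n + k·log p/n)·σ̂, and ρ_2(k) ≤ C·k·√(log p/n)·σ ≤ log p·k·√(log p/n)·σ̂. -/
/-!
On these events every data-dependent quantity in `ρ₁(k)` and `ρ₂(k)` is bounded by a constant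
depending only on `M₁` and `α`. (G₁) traps the column norms between multiples of `√n`; together
with the eigenvalue bounds on `Ω`, (G₄) and `k log p / n ≤ c_*` it gives `κ ≥ 1 / (8 √M₁)`, which
bounds `C₁(X, k)` and `C₂(X, k)`. By (B₁) the vector `Ωξ` is feasible for the program defining `û`,
so `ûᵀΣ̂û ≤ (Ωξ)ᵀΣ̂(Ωξ) ≤ 2 M₁ ‖ξ‖₂²` by (G₃); and `z_{α/2}` is finite. Finally (S₂) trades `σ̂` for
`σ` at the cost of a factor `1.01`, and `p₀` is chosen so that `log p` exceeds twice the resulting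
constant `C`.
-/

open scoped ENNReal

noncomputable section

namespace CIHD

/-- `‖β‖₀`: the number of nonzero coordinates of `β`. -/
def sparsity {p : ℕ} (β : Fin p → ℝ) : ℕ := Nat.card {i : Fin p // β i ≠ 0}

/-- the vector `ℓ₂` (Euclidean) norm. -/
def l2 {p : ℕ} (ξ : Fin p → ℝ) : ℝ := Real.sqrt (∑ j, (ξ j) ^ 2)

/-- the vector `ℓ∞` norm. -/
def vinf {p : ℕ} (v : Fin p → ℝ) : ℝ := ⨆ j, |v j|

/-- `‖X_{·j}‖₂`: the Euclidean norm of the `j`-th column of `X`. -/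
def colNorm (n p : ℕ) (X : Fin n → Fin p → ℝ) (j : Fin p) : ℝ :=
  Real.sqrt (∑ i, (X i j) ^ 2)

/-- `min_j ‖X_{·j}‖₂`. -/
def minCol (n p : ℕ) (X : Fin n → Fin p → ℝ) : ℝ := ⨅ j, colNorm n p X j

/-- `max_j ‖X_{·j}‖₂`. -/
def maxCol (n p : ℕ) (X : Fin n → Fin p → ℝ) : ℝ := ⨆ j, colNorm n p X j

/-- the restricted eigenvalue `κ(X, k, α₀)`. -/
def kappa (n p : ℕ) (X : Fin n → Fin p → ℝ) (k : ℕ) (α₀ : ℝ) : ℝ :=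
  sInf {r | ∃ (J₀ : Finset (Fin p)) (δ : Fin p → ℝ),
    J₀.card ≤ k ∧ δ ≠ 0 ∧ (∑ j ∈ J₀ᶜ, |δ j|) ≤ α₀ * ∑ j ∈ J₀, |δ j| ∧
      r = Real.sqrt (∑ i, (∑ j, X i j * δ j) ^ 2) /
        (Real.sqrt n * Real.sqrt (∑ j ∈ J₀, (δ j) ^ 2))}

/-- the scaled Lasso objective with penalty level `λ₀`, as a function of `(b, s)`. -/
def slObj (n p : ℕ) (lam : ℝ) (X : Fin n → Fin p → ℝ) (y : Fin n → ℝ)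
    (bs : (Fin p → ℝ) × ℝ) : ℝ :=
  (∑ i, (y i - ∑ j, X i j * bs.1 j) ^ 2) / (2 * n * bs.2) + bs.2 / 2 +
    lam * ∑ j, (colNorm n p X j / Real.sqrt n) * |bs.1 j|

/-- `(b, s)` is a scaled Lasso solution with penalty level `λ₀`. -/
def IsScaledLasso (n p : ℕ) (lam : ℝ) (X : Fin n → Fin p → ℝ) (y : Fin n → ℝ)
    (b : Fin p → ℝ) (s : ℝ) : Prop :=
  0 < s ∧ IsMinOn (slObj n p lam X y) {bs : (Fin p → ℝ) × ℝ | 0 < bs.2} (b, s)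

/-- the normalized design `W = X D`, `D = diag(√n / ‖X_{·j}‖₂)`. -/
def Wmat (n p : ℕ) (X : Fin n → Fin p → ℝ) (i : Fin n) (j : Fin p) : ℝ :=
  X i j * Real.sqrt n / colNorm n p X j

/-- the normalized coefficients `d = D⁻¹ β`. -/
def dvec (n p : ℕ) (X : Fin n → Fin p → ℝ) (β : Fin p → ℝ) (j : Fin p) : ℝ :=
  β j * colNorm n p X j / Real.sqrt n

/-- the oracle noise level `σ^{ora} = ‖y − Xβ‖₂ / √n`. -/
def sigOra (n p : ℕ) (X : Fin n → Fin p → ℝ) (y : Fin n → ℝ) (β : Fin p → ℝ) : ℝ :=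
  Real.sqrt (∑ i, (y i - ∑ j, X i j * β j) ^ 2) / Real.sqrt n

/-- the `ℓ₁` cone invertibility factor `CIF₁(α₀, K, W)`. -/
def CIF1 (n p : ℕ) (α₀ : ℝ) (K : Finset (Fin p)) (W : Fin n → Fin p → ℝ) : ℝ :=
  sInf {r | ∃ u : Fin p → ℝ, u ≠ 0 ∧
    (∑ j ∈ Kᶜ, |u j|) ≤ α₀ * ∑ j ∈ K, |u j| ∧
      r = (K.card : ℝ) *
          vinf (fun j => ∑ b, ((∑ i, W i j * W i b) / n) * u b) / ∑ j ∈ K, |u j|}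

open Classical in
/-- the set `T = {j : |d_j| ≥ λ₀ σ^{ora}}`. -/
def Tset (n p : ℕ) (lam : ℝ) (X : Fin n → Fin p → ℝ) (y : Fin n → ℝ)
    (β : Fin p → ℝ) : Finset (Fin p) :=
  Finset.univ.filter fun j => lam * sigOra n p X y β ≤ |dvec n p X β j|

/-- the quantity `τ`. -/
def tau (n p : ℕ) (ε₀ lam : ℝ) (X : Fin n → Fin p → ℝ) (y : Fin n → ℝ)
    (β : Fin p → ℝ) : ℝ :=
  (1 + ε₀) * lam *
    max ((4 / sigOra n p X y β) * ∑ j ∈ (Tset n p lam X y β)ᶜ, |dvec n p X β j|)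
      (8 * lam * ((Tset n p lam X y β).card : ℝ) /
        CIF1 n p (2 * ε₀ + 1) (Tset n p lam X y β) (Wmat n p X))

end CIHD

namespace CIHD

open Matrix

/-- the sample covariance matrix `Σ̂ = XᵀX / n`. -/
def Sigmahat (n p : ℕ) (X : Fin n → Fin p → ℝ) : Matrix (Fin p) (Fin p) ℝ :=
  Matrix.of fun a b => (∑ i, X i a * X i b) / n

/-- the upper `a`-quantile `z_a` of the standard normal distribution. -/
def zquant (a : ℝ) : ℝ :=
  sInf {t : ℝ | (ProbabilityTheory.gaussianReal 0 1 (Set.Ioi t)).toReal ≤ a}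

/-- `1/M₁ ≤ λ_min(Ω) ≤ λ_max(Ω) ≤ M₁` for a symmetric matrix `Ω`, expressed
through two-sided Rayleigh-quotient bounds. -/
def eigBounds {p : ℕ} (Ω : Matrix (Fin p) (Fin p) ℝ) (M₁ : ℝ) : Prop :=
  Ω.IsSymm ∧
    ∀ v : Fin p → ℝ,
      (1 / M₁) * (∑ j, (v j) ^ 2) ≤ v ⬝ᵥ Ω.mulVec v ∧
        v ⬝ᵥ Ω.mulVec v ≤ M₁ * (∑ j, (v j) ^ 2)

/-- the constant `C₁(X, k)`. -/
def C1fun (n p : ℕ) (M₁ : ℝ) (X : Fin n → Fin p → ℝ) (k : ℕ) : ℝ :=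
  7000 * M₁ ^ 2 * (Real.sqrt n / minCol n p X) *
    max 1.25 (912 * (maxCol n p X) ^ 2 /
      (n * (kappa n p X k (405 * (maxCol n p X / minCol n p X))) ^ 2))

/-- the half-length `ρ₁(k)`. -/
def rho1 (n p : ℕ) (α M₁ : ℝ) (ξ : Fin p → ℝ) (X : Fin n → Fin p → ℝ)
    (u : Fin p → ℝ) (shat : ℝ) (k : ℕ) : ℝ :=
  l2 ξ * shat *
    min (1.01 * Real.sqrt ((u ⬝ᵥ (Sigmahat n p X).mulVec u) / (n * (l2 ξ) ^ 2)) *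
          zquant (α / 2) + C1fun n p M₁ X k * k * Real.log p / n)
      (Real.log p * (1 / Real.sqrt n + k * Real.log p / n))

/-- the constant `C₂(X, k)`. -/
def C2fun (n p : ℕ) (X : Fin n → Fin p → ℝ) (k : ℕ) : ℝ :=
  822 * (Real.sqrt n / minCol n p X) *
    max 1.25 (912 * (maxCol n p X) ^ 2 /
      (n * (kappa n p X k (405 * (maxCol n p X / minCol n p X))) ^ 2))

/-- the half-length `ρ₂(k)`. -/
def rho2 (n p : ℕ) (X : Fin n → Fin p → ℝ) (shat : ℝ) (k : ℕ) : ℝ :=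
  min (C2fun n p X k * k * Real.sqrt (Real.log p / n) * shat)
    (Real.log p * (k * Real.sqrt (Real.log p / n) * shat))

/-- `u` is a solution `û` of the constrained minimization
`argmin {uᵀΣ̂u : ‖Σ̂u − ξ‖_∞ ≤ λ_n}`. -/
def IsUhat (n p : ℕ) (lamn : ℝ) (ξ : Fin p → ℝ) (X : Fin n → Fin p → ℝ)
    (u : Fin p → ℝ) : Prop :=
  vinf (fun j => (Sigmahat n p X).mulVec u j - ξ j) ≤ lamn ∧
    IsMinOn (fun v => v ⬝ᵥ (Sigmahat n p X).mulVec v)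
      {v : Fin p → ℝ | vinf (fun j => (Sigmahat n p X).mulVec v j - ξ j) ≤ lamn} u

open Filter Topology MeasureTheory ProbabilityTheory

lemma exists_nat_zquant_le {a : ℝ} (ha : 0 < a) : ∃ N : ℕ, zquant a ≤ N := by
  have htail : Tendsto (fun t => (gaussianReal 0 1 (Set.Ioi t)).toReal) atTop (𝓝 0) := by
    have h := (tendsto_cdf_atTop (μ := gaussianReal 0 1)).const_sub 1
    rw [sub_self] at h
    refine h.congr fun t => ?_
    rw [cdf_eq_real, ← Set.compl_Iic, ← measureReal_def,
      probReal_compl_eq_one_sub measurableSet_Iic]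
  obtain ⟨t, ht⟩ := (htail.eventually (ge_mem_nhds ha)).exists_forall_of_atTop
  obtain ⟨N, hN⟩ := exists_nat_ge t
  refine ⟨N, ?_⟩
  by_cases hb : BddBelow {t : ℝ | (gaussianReal 0 1 (Set.Ioi t)).toReal ≤ a}
  · exact csInf_le hb (ht N hN)
  · rw [zquant, Real.sInf_of_not_bddBelow hb]
    positivity

lemma l2_sq {p : ℕ} (ξ : Fin p → ℝ) : l2 ξ ^ 2 = ∑ j, ξ j ^ 2 :=
  Real.sq_sqrt (Finset.sum_nonneg fun _ _ => sq_nonneg _)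

lemma l2_pos {p : ℕ} {ξ : Fin p → ℝ} (hξ : ξ ≠ 0) : 0 < l2 ξ := by
  obtain ⟨j, hj⟩ := Function.ne_iff.1 hξ
  exact Real.sqrt_pos.2 <| Finset.sum_pos' (fun _ _ => sq_nonneg _)
    ⟨j, Finset.mem_univ j, pow_two_pos_of_ne_zero hj⟩

lemma eigenvalues_mem_Icc_of_rayleigh {ι : Type*} [Fintype ι] [DecidableEq ι]
    {Ω : Matrix ι ι ℝ} (hΩ : Ω.IsHermitian) {a b : ℝ}
    (hray : ∀ v : ι → ℝ, a * ∑ j, v j ^ 2 ≤ v ⬝ᵥ Ω *ᵥ v ∧ v ⬝ᵥ Ω *ᵥ v ≤ b * ∑ j, v j ^ 2)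
    (i : ι) : hΩ.eigenvalues i ∈ Set.Icc a b := by
  set v : ι → ℝ := ⇑(hΩ.eigenvectorBasis i)
  have hv : v ≠ 0 := fun h =>
    hΩ.eigenvectorBasis.orthonormal.ne_zero i (by ext j; exact congrFun h j)
  obtain ⟨j, hj⟩ := Function.ne_iff.1 hv
  have hS : 0 < ∑ j, v j ^ 2 :=
    Finset.sum_pos' (fun _ _ => sq_nonneg _) ⟨j, Finset.mem_univ j, pow_two_pos_of_ne_zero hj⟩
  have hquad : v ⬝ᵥ Ω *ᵥ v = hΩ.eigenvalues i * ∑ j, v j ^ 2 := by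
    rw [hΩ.mulVec_eigenvectorBasis i, dotProduct_smul, smul_eq_mul]
    simp only [dotProduct, v, sq]
  obtain ⟨hlo, hhi⟩ := hray v
  rw [hquad] at hlo hhi
  exact ⟨le_of_mul_le_mul_right hlo hS, le_of_mul_le_mul_right hhi hS⟩

section ColumnNorms

variable {n p : ℕ} {X : Fin n → Fin p → ℝ} [Nonempty (Fin p)] {a b : ℝ}

lemma maxCol_nonneg : 0 ≤ maxCol n p X :=
  (Real.sqrt_nonneg _).trans <|
    le_ciSup (Set.finite_range (colNorm n p X)).bddAbove (Classical.arbitrary _)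

lemma pos_of_forall_lt_colNorm_div_sqrt (ha : 0 < a)
    (hcol : ∀ j, a < colNorm n p X j / Real.sqrt n) : 0 < n := by
  refine Nat.pos_of_ne_zero fun hn => ?_
  subst hn
  have := hcol (Classical.arbitrary _)
  rw [Nat.cast_zero, Real.sqrt_zero, div_zero] at this
  linarith

lemma mul_sqrt_le_minCol (hn : 0 < n) (hcol : ∀ j, a < colNorm n p X j / Real.sqrt n) :
    a * Real.sqrt n ≤ minCol n p X :=
  le_ciInf fun j => ((lt_div_iff₀ (by positivity)).1 (hcol j)).le

lemma maxCol_le_mul_sqrt (hn : 0 < n) (hcol : ∀ j, colNorm n p X j / Real.sqrt n < b) :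
    maxCol n p X ≤ b * Real.sqrt n :=
  ciSup_le fun j => ((div_lt_iff₀ (by positivity)).1 (hcol j)).le

lemma sqrt_div_minCol_le (ha : 0 < a) (hn : 0 < n)
    (hcol : ∀ j, a < colNorm n p X j / Real.sqrt n) :
    Real.sqrt n / minCol n p X ≤ a⁻¹ := by
  have hsn : 0 < Real.sqrt n := by positivity
  calc Real.sqrt n / minCol n p X ≤ Real.sqrt n / (a * Real.sqrt n) :=
        div_le_div_of_nonneg_left hsn.le (by positivity) (mul_sqrt_le_minCol hn hcol)
    _ = a⁻¹ := by field_simp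

lemma maxCol_div_minCol_le (ha : 0 < a) (hn : 0 < n)
    (hcol : ∀ j, a < colNorm n p X j / Real.sqrt n ∧ colNorm n p X j / Real.sqrt n < b) :
    maxCol n p X / minCol n p X ≤ b / a := by
  have hsn : 0 < Real.sqrt n := by positivity
  have hmax := maxCol_le_mul_sqrt hn fun j => (hcol j).2
  calc maxCol n p X / minCol n p X ≤ b * Real.sqrt n / (a * Real.sqrt n) :=
        div_le_div₀ (maxCol_nonneg.trans hmax) hmax (by positivity)
          (mul_sqrt_le_minCol hn fun j => (hcol j).1)
    _ = b / a := mul_div_mul_right b a hsn.ne'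

lemma maxCol_sq_le (hn : 0 < n) (hcol : ∀ j, colNorm n p X j / Real.sqrt n < b) :
    maxCol n p X ^ 2 ≤ b ^ 2 * n := by
  calc maxCol n p X ^ 2 ≤ (b * Real.sqrt n) ^ 2 :=
        pow_le_pow_left₀ maxCol_nonneg (maxCol_le_mul_sqrt hn hcol) 2
    _ = b ^ 2 * n := by rw [mul_pow, Real.sq_sqrt n.cast_nonneg]

lemma minCol_maxCol_bounds {M : ℝ} (hM : 1 ≤ M) (hn : 0 < n)
    (hG1 : ∀ j, 2 / (5 * Real.sqrt M) < colNorm n p X j / Real.sqrt n ∧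
      colNorm n p X j / Real.sqrt n < 7 * Real.sqrt M / 5) :
    Real.sqrt n / minCol n p X ≤ 5 * M / 2 ∧ maxCol n p X / minCol n p X ≤ 7 * M / 2 ∧
      maxCol n p X ^ 2 ≤ 49 / 25 * M * n := by
  have hsM : 0 < Real.sqrt M := by positivity
  have hsM2 : Real.sqrt M ^ 2 = M := Real.sq_sqrt (by linarith)
  refine ⟨?_, ?_, ?_⟩
  · calc Real.sqrt n / minCol n p X ≤ (2 / (5 * Real.sqrt M))⁻¹ :=
          sqrt_div_minCol_le (by positivity) hn fun j => (hG1 j).1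
      _ = 5 * Real.sqrt M / 2 := by rw [inv_div]
      _ ≤ 5 * M / 2 := by nlinarith [Real.one_le_sqrt.2 hM]
  · calc maxCol n p X / minCol n p X ≤ 7 * Real.sqrt M / 5 / (2 / (5 * Real.sqrt M)) :=
          maxCol_div_minCol_le (by positivity) hn hG1
      _ = 7 * M / 2 := by field_simp; exact hsM2
  · calc maxCol n p X ^ 2 ≤ (7 * Real.sqrt M / 5) ^ 2 * n := maxCol_sq_le hn fun j => (hG1 j).2
      _ = 49 / 25 * M * n := by rw [div_pow, mul_pow, hsM2]; ring

end ColumnNorms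

section RestrictedEigenvalue

variable {n p k : ℕ} {X : Fin n → Fin p → ℝ} {M : ℝ}

lemma one_div_sqrt_le_sqrt {l : ℝ} (hM : 0 < M) (hl : 1 / M ≤ l) :
    1 / Real.sqrt l ≤ Real.sqrt M := by
  have hl0 : 0 < l := (by positivity : (0 : ℝ) < 1 / M).trans_le hl
  rw [div_le_iff₀ (Real.sqrt_pos.2 hl0), ← Real.sqrt_mul hM.le, Real.le_sqrt zero_le_one
    (by positivity), one_pow]
  rwa [div_le_iff₀ hM, mul_comm] at hl

lemma one_div_eight_sqrt_le_kappa [Nonempty (Fin p)] {Ω : Matrix (Fin p) (Fin p) ℝ}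
    (hHerm : Ω.IsHermitian) (hM : 0 < M) (hΩ : eigBounds Ω M)
    (hr : maxCol n p X / minCol n p X ≤ 7 * M / 2)
    (hs : Real.sqrt (k * Real.log p / n) ≤ 1 / (72 * M * (1 + 1418 * M)))
    (hG4 : kappa n p X k (405 * (maxCol n p X / minCol n p X)) ≥
      1 / (4 * Real.sqrt (⨆ i, hHerm.eigenvalues i)) -
        9 * (1 + 405 * (maxCol n p X / minCol n p X)) * Real.sqrt (k * Real.log p / n) /
          Real.sqrt (⨅ i, hHerm.eigenvalues i)) :
    1 / (8 * Real.sqrt M) ≤ kappa n p X k (405 * (maxCol n p X / minCol n p X)) := by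
  have heig := eigenvalues_mem_Icc_of_rayleigh hHerm fun v => hΩ.2 v
  have hbdd := (Set.finite_range hHerm.eigenvalues).bddAbove
  have hΛM : (⨆ i, hHerm.eigenvalues i) ≤ M := ciSup_le fun i => (heig i).2
  have hΛ : 0 < ⨆ i, hHerm.eigenvalues i :=
    (by positivity : (0 : ℝ) < 1 / M).trans_le <|
      (heig (Classical.arbitrary _)).1.trans (le_ciSup hbdd _)
  have hsM : 0 < Real.sqrt M := Real.sqrt_pos.2 hM
  have hfirst : 1 / (4 * Real.sqrt M) ≤ 1 / (4 * Real.sqrt (⨆ i, hHerm.eigenvalues i)) := by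
    gcongr
  have hinv := one_div_sqrt_le_sqrt hM (le_ciInf fun i => (heig i).1 : 1 / M ≤ ⨅ i, _)
  set s := Real.sqrt (k * Real.log p / n)
  have hs0 : 0 ≤ s := Real.sqrt_nonneg _
  -- `c_*` is chosen so that the perturbation term is half of `1 / (4 √M)`
  have hsecond : 9 * (1 + 405 * (maxCol n p X / minCol n p X)) * s /
      Real.sqrt (⨅ i, hHerm.eigenvalues i) ≤ 1 / (8 * Real.sqrt M) :=
    calc _ = 9 * (1 + 405 * (maxCol n p X / minCol n p X)) *
          (s * (1 / Real.sqrt (⨅ i, hHerm.eigenvalues i))) := by ring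
      _ ≤ 9 * (1 + 1418 * M) * (s * Real.sqrt M) :=
          mul_le_mul (by linarith) (by gcongr) (by positivity) (by positivity)
      _ ≤ 9 * (1 + 1418 * M) * (1 / (72 * M * (1 + 1418 * M)) * Real.sqrt M) := by gcongr
      _ = 1 / (8 * Real.sqrt M) := by
          field_simp
          rw [Real.sq_sqrt hM.le]
          ring
  have hhalf : 1 / (4 * Real.sqrt M) = 2 * (1 / (8 * Real.sqrt M)) := by field_simp; norm_num
  linarith

end RestrictedEigenvalue

section Constants

variable {n p k : ℕ} {X : Fin n → Fin p → ℝ} {M : ℝ}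

def reFactor (n p : ℕ) (X : Fin n → Fin p → ℝ) (k : ℕ) : ℝ :=
  max 1.25 (912 * maxCol n p X ^ 2 /
    (n * kappa n p X k (405 * (maxCol n p X / minCol n p X)) ^ 2))

lemma C1fun_eq (M : ℝ) :
    C1fun n p M X k = 7000 * M ^ 2 * (Real.sqrt n / minCol n p X) * reFactor n p X k := rfl

lemma C2fun_eq : C2fun n p X k = 822 * (Real.sqrt n / minCol n p X) * reFactor n p X k := rfl

lemma reFactor_pos : 0 < reFactor n p X k :=
  lt_max_of_lt_left (by norm_num)

lemma reFactor_le (hM : 1 ≤ M) (hn : 0 < n) (hmax : maxCol n p X ^ 2 ≤ 49 / 25 * M * n)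
    (hκ : 1 / (8 * Real.sqrt M) ≤ kappa n p X k (405 * (maxCol n p X / minCol n p X))) :
    reFactor n p X k ≤ 912 * (49 / 25) * 64 * M ^ 2 := by
  set κ := kappa n p X k (405 * (maxCol n p X / minCol n p X))
  have hκ0 : 0 < κ := lt_of_lt_of_le (by positivity) hκ
  have hκsq : 1 ≤ 64 * M * κ ^ 2 := by
    calc (1 : ℝ) = 64 * M * (1 / (8 * Real.sqrt M)) ^ 2 := by
          rw [div_pow, mul_pow, Real.sq_sqrt (by linarith)]
          field_simp
          norm_num
      _ ≤ 64 * M * κ ^ 2 := by gcongr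
  refine max_le (by nlinarith) ?_
  rw [div_le_iff₀ (by positivity)]
  have hMn : 0 ≤ M * n := by positivity
  nlinarith [mul_le_mul_of_nonneg_left hκsq hMn]

lemma C1fun_le {a R : ℝ} (hsn : Real.sqrt n / minCol n p X ≤ a)
    (ha : 0 ≤ a) (hR : reFactor n p X k ≤ R) :
    C1fun n p M X k ≤ 7000 * M ^ 2 * a * R := by
  rw [C1fun_eq]
  gcongr
  exact reFactor_pos.le

lemma C2fun_le {a R : ℝ} (hsn : Real.sqrt n / minCol n p X ≤ a)
    (ha : 0 ≤ a) (hR : reFactor n p X k ≤ R) :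
    C2fun n p X k ≤ 822 * a * R := by
  rw [C2fun_eq]
  gcongr
  exact reFactor_pos.le

lemma C1fun_le_and_C2fun_le [Nonempty (Fin p)] {Ω : Matrix (Fin p) (Fin p) ℝ}
    (hHerm : Ω.IsHermitian) (hM : 1 < M) (hΩ : eigBounds Ω M) (hn : 0 < n)
    (hG1 : ∀ j, 2 / (5 * Real.sqrt M) < colNorm n p X j / Real.sqrt n ∧
      colNorm n p X j / Real.sqrt n < 7 * Real.sqrt M / 5)
    (hs : Real.sqrt (k * Real.log p / n) ≤ 1 / (72 * M * (1 + 1418 * M)))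
    (hG4 : kappa n p X k (405 * (maxCol n p X / minCol n p X)) ≥
      1 / (4 * Real.sqrt (⨆ i, hHerm.eigenvalues i)) -
        9 * (1 + 405 * (maxCol n p X / minCol n p X)) * Real.sqrt (k * Real.log p / n) /
          Real.sqrt (⨅ i, hHerm.eigenvalues i)) :
    C1fun n p M X k ≤ 7000 * M ^ 2 * (5 * M / 2) * (912 * (49 / 25) * 64 * M ^ 2) ∧
      C2fun n p X k ≤ 822 * (5 * M / 2) * (912 * (49 / 25) * 64 * M ^ 2) := by
  obtain ⟨hsn, hr, hmax⟩ := minCol_maxCol_bounds hM.le hn hG1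
  have hκ := one_div_eight_sqrt_le_kappa hHerm (by linarith) hΩ hr hs hG4
  have hRE := reFactor_le hM.le hn hmax hκ
  exact ⟨C1fun_le hsn (by positivity) hRE, C2fun_le hsn (by positivity) hRE⟩

end Constants

section Uhat

variable {n p : ℕ} {X : Fin n → Fin p → ℝ}

lemma Sigmahat_transpose : (Sigmahat n p X)ᵀ = Sigmahat n p X := by
  ext a b
  simp only [Sigmahat, transpose_apply, of_apply, mul_comm]

lemma Sigmahat_mulVec_mulVec {Ω : Matrix (Fin p) (Fin p) ℝ} (hΩ : Ω.IsSymm) (ξ : Fin p → ℝ) :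
    Sigmahat n p X *ᵥ (Ω *ᵥ ξ) = vecMul ξ (Ω * Sigmahat n p X) := by
  rw [← vecMul_vecMul, ← mulVec_transpose Ω, hΩ.eq, ← mulVec_transpose, Sigmahat_transpose]

lemma le_two_mul_of_abs_div_sub_one_le {a b t : ℝ} (hb : 0 < b) (h : |a / b - 1| ≤ t)
    (ht : t ≤ 1) : a ≤ 2 * b := by
  have h' := (abs_le.1 h).2
  rw [div_sub_one hb.ne', div_le_iff₀ hb] at h'
  nlinarith

lemma two_sqrt_add_two_mul_le_one {x : ℝ} (hx : x ≤ 1 / 25) :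
    2 * Real.sqrt x + 2 * x ≤ 1 := by
  have : Real.sqrt x ≤ 1 / 5 := by
    rw [Real.sqrt_le_left (by norm_num)]
    linarith
  linarith

lemma quadForm_uhat_le {M lamn t : ℝ} {Ω : Matrix (Fin p) (Fin p) ℝ} {ξ uhat : Fin p → ℝ}
    (hU : IsUhat n p lamn ξ X uhat) (hM : 0 < M) (hΩ : eigBounds Ω M) (hξ : ξ ≠ 0)
    (hB1 : vinf (fun j => vecMul ξ (Ω * Sigmahat n p X) j - ξ j) ≤ lamn)
    (hG3 : |(Ω *ᵥ ξ) ⬝ᵥ Sigmahat n p X *ᵥ (Ω *ᵥ ξ) / (ξ ⬝ᵥ Ω *ᵥ ξ) - 1| ≤ t) (ht : t ≤ 1) :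
    uhat ⬝ᵥ Sigmahat n p X *ᵥ uhat ≤ 2 * M * l2 ξ ^ 2 := by
  have hfeas : Ω *ᵥ ξ ∈ {v | vinf (fun j => (Sigmahat n p X *ᵥ v) j - ξ j) ≤ lamn} := by
    rwa [← Sigmahat_mulVec_mulVec hΩ.1] at hB1
  have hξΩξ : 0 < ξ ⬝ᵥ Ω *ᵥ ξ :=
    lt_of_lt_of_le (by have := l2_pos hξ; rw [← l2_sq]; positivity) (hΩ.2 ξ).1
  calc uhat ⬝ᵥ Sigmahat n p X *ᵥ uhat ≤ (Ω *ᵥ ξ) ⬝ᵥ Sigmahat n p X *ᵥ (Ω *ᵥ ξ) :=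
        isMinOn_iff.1 hU.2 _ hfeas
    _ ≤ 2 * (ξ ⬝ᵥ Ω *ᵥ ξ) := le_two_mul_of_abs_div_sub_one_le hξΩξ hG3 ht
    _ ≤ 2 * M * l2 ξ ^ 2 := by rw [mul_assoc, l2_sq]; gcongr; exact (hΩ.2 ξ).2

end Uhat

section Radii

variable {n p k : ℕ} {X : Fin n → Fin p → ℝ} {M : ℝ}

lemma rho1_le {α N K shat : ℝ} {ξ uhat : Fin p → ℝ} (hn : 0 < n) (hξ : ξ ≠ 0)
    (hshat : 0 ≤ shat) (hz : zquant (α / 2) ≤ N) (hN : 0 ≤ N)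
    (hq : uhat ⬝ᵥ Sigmahat n p X *ᵥ uhat ≤ 2 * M * l2 ξ ^ 2) (hK : 0 ≤ K)
    (hC1 : C1fun n p M X k ≤ K) :
    rho1 n p α M ξ X uhat shat k ≤
      (1.01 * Real.sqrt (2 * M) * N + K) * (l2 ξ * (1 / Real.sqrt n + k * Real.log p / n)) *
        shat := by
  have hl := l2_pos hξ
  set q := Real.sqrt (uhat ⬝ᵥ Sigmahat n p X *ᵥ uhat / (n * l2 ξ ^ 2))
  have hqle : q ≤ Real.sqrt (2 * M) * (1 / Real.sqrt n) := by
    rw [mul_one_div, ← Real.sqrt_div' _ n.cast_nonneg]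
    refine Real.sqrt_le_sqrt ?_
    rw [div_le_div_iff₀ (by positivity) (by positivity)]
    nlinarith
  have hzterm : q * zquant (α / 2) ≤ Real.sqrt (2 * M) * (1 / Real.sqrt n) * N :=
    (mul_le_mul_of_nonneg_left hz (Real.sqrt_nonneg _)).trans
      (mul_le_mul_of_nonneg_right hqle hN)
  have hC1term : C1fun n p M X k * k * Real.log p / n ≤ K * (k * Real.log p / n) := by
    rw [mul_div_assoc, mul_assoc, ← mul_div_assoc]
    gcongr
  calc rho1 n p α M ξ X uhat shat k
      ≤ l2 ξ * shat * (1.01 * q * zquant (α / 2) + C1fun n p M X k * k * Real.log p / n) :=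
        mul_le_mul_of_nonneg_left (min_le_left _ _) (by positivity)
    _ ≤ l2 ξ * shat * (1.01 * (Real.sqrt (2 * M) * (1 / Real.sqrt n) * N) +
          K * (k * Real.log p / n)) := by
        rw [mul_assoc 1.01]
        gcongr
    _ ≤ _ := by
        have : 0 ≤ k * Real.log p / n := by positivity
        nlinarith [mul_nonneg (mul_nonneg hl.le hshat) (mul_nonneg hK (by positivity :
          (0 : ℝ) ≤ 1 / Real.sqrt n)), mul_nonneg (mul_nonneg hl.le hshat)
          (mul_nonneg (by positivity : (0 : ℝ) ≤ 1.01 * Real.sqrt (2 * M) * N) this)]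

lemma rho2_le {K shat : ℝ} (hshat : 0 ≤ shat) (hC2 : C2fun n p X k ≤ K) :
    rho2 n p X shat k ≤ K * (k * Real.sqrt (Real.log p / n)) * shat :=
  calc rho2 n p X shat k ≤ C2fun n p X k * (k * Real.sqrt (Real.log p / n) * shat) := by
        rw [← mul_assoc, ← mul_assoc]
        exact min_le_left _ _
    _ ≤ K * (k * Real.sqrt (Real.log p / n) * shat) := by gcongr
    _ = K * (k * Real.sqrt (Real.log p / n)) * shat := by ring

end Radii

section Calibration

lemma le_mul_mul_of_le_mul_mul {ρ B C r s σ : ℝ} (hρ : ρ ≤ B * r * s) (hB : 0 ≤ B)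
    (hBC : 2 * B ≤ C) (hr : 0 ≤ r) (hs : 0 ≤ s) (hσ : (1 - 0.01) * s ≤ σ) :
    ρ ≤ C * r * σ := by
  have hrs : 0 ≤ r * s := mul_nonneg hr hs
  nlinarith [mul_le_mul_of_nonneg_left hσ (mul_nonneg (hB.trans (by linarith) : 0 ≤ C) hr)]

lemma mul_mul_le_mul_mul {C L r s σ : ℝ} (hC : 0 ≤ C) (hCL : 2 * C ≤ L) (hr : 0 ≤ r)
    (hs : 0 ≤ s) (hσ : σ ≤ (1 + 0.01) * s) : C * r * σ ≤ L * r * s := by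
  have hrs : 0 ≤ r * s := mul_nonneg hr hs
  nlinarith [mul_le_mul_of_nonneg_left hσ (mul_nonneg hC hr)]

lemma le_log_of_ceil_exp_le {x : ℝ} {p : ℕ} (h : ⌈Real.exp x⌉₊ ≤ p) : x ≤ Real.log p := by
  have hexp : Real.exp x ≤ p := (Nat.le_ceil _).trans (by exact_mod_cast h)
  exact (Real.le_log_iff_exp_le ((Real.exp_pos x).trans_le hexp)).2 hexp

lemma sqrt_mul_div_le {k L n c : ℝ} (hL : 0 < L) (hn : 0 < n) (hc : 0 ≤ c)
    (hk : k ≤ c ^ 2 * n / L) : Real.sqrt (k * L / n) ≤ c := by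
  rw [Real.sqrt_le_left hc, div_le_iff₀ hn]
  rwa [le_div_iff₀ hL] at hk

end Calibration

theorem radius_control_general
    (α M₁ M₂ : ℝ) (hα₁ : 0 < α) (hM₁ : 1 < M₁) :
    ∃ cstar : ℝ, 0 < cstar ∧ ∃ C : ℝ, 0 < C ∧ ∃ p₀ : ℕ,
      ∀ (n p k : ℕ) (X : Fin n → Fin p → ℝ) (hcols : ∀ j, ∃ i, X i j ≠ 0)
        (Ω : Matrix (Fin p) (Fin p) ℝ) (hHerm : Ω.IsHermitian)
        (hΩ : eigBounds Ω M₁)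
        (ξ : Fin p → ℝ) (hξ : ξ ≠ 0)
        (β : Fin p → ℝ) (hβ : sparsity β ≤ k)
        (ε : Fin n → ℝ) (σ : ℝ) (hσ : 0 < σ) (hσM : σ ≤ M₂)
        (y : Fin n → ℝ) (hy : y = fun i => (∑ j, X i j * β j) + ε i)
        (lam : ℝ) (hlam : lam = (1 + 0.01) * Real.sqrt (2 * 1.0048 * Real.log p / n))
        (bhat : Fin p → ℝ) (shat : ℝ) (uhat : Fin p → ℝ),
        p₀ ≤ p →
        Real.log p / n ≤ 1 / 25 → 2 < 1.0048 * Real.log p →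
        (k : ℝ) ≤ cstar * n / Real.log p →
        IsScaledLasso n p lam X y bhat shat →
        IsUhat n p (12 * l2 ξ * M₁ ^ 2 * Real.sqrt (Real.log p / n)) ξ X uhat →
        -- event (G₁)
        (∀ j, 2 / (5 * Real.sqrt M₁) < colNorm n p X j / Real.sqrt n ∧
          colNorm n p X j / Real.sqrt n < 7 * Real.sqrt M₁ / 5) →
        -- event (G₂)
        |(sigOra n p X y β) ^ 2 / σ ^ 2 - 1| ≤
          2 * Real.sqrt (Real.log p / n) + 2 * (Real.log p / n) →
        -- event (G₃)
        (max |(ξ ⬝ᵥ (Sigmahat n p X).mulVec ξ) / (ξ ⬝ᵥ (Ω⁻¹).mulVec ξ) - 1|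
            |((Ω.mulVec ξ) ⬝ᵥ (Sigmahat n p X).mulVec (Ω.mulVec ξ)) /
                (ξ ⬝ᵥ Ω.mulVec ξ) - 1| ≤
          2 * Real.sqrt (Real.log p / n) + 2 * (Real.log p / n)) →
        -- event (G₄)
        (kappa n p X k (405 * (maxCol n p X / minCol n p X)) ≥
          1 / (4 * Real.sqrt (⨆ i, hHerm.eigenvalues i)) -
            9 * (1 + 405 * (maxCol n p X / minCol n p X)) *
              Real.sqrt (k * Real.log p / n) /
                Real.sqrt (⨅ i, hHerm.eigenvalues i)) →
        -- event (G₅)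
        vinf (fun j => (∑ i, Wmat n p X i j * ε i) / n) ≤
          σ * Real.sqrt (2 * 1.0048 * Real.log p / n) →
        -- event (S₁)
        vinf (fun j => (∑ i, Wmat n p X i j * ε i) / n) ≤
          sigOra n p X y β * lam * ((202 - 1) / (202 + 1)) *
            (1 - tau n p 202 lam X y β) →
        -- event (S₂)
        (1 - 0.01) * shat ≤ σ → σ ≤ (1 + 0.01) * shat →
        -- event (B₁)
        vinf (fun j => Matrix.vecMul ξ (Ω * Sigmahat n p X) j - ξ j) ≤
          12 * l2 ξ * M₁ ^ 2 * Real.sqrt (Real.log p / n) →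
        (rho1 n p α M₁ ξ X uhat shat k ≤
            C * l2 ξ * (1 / Real.sqrt n + k * Real.log p / n) * σ ∧
          C * l2 ξ * (1 / Real.sqrt n + k * Real.log p / n) * σ ≤
            l2 ξ * Real.log p * (1 / Real.sqrt n + k * Real.log p / n) * shat ∧
          rho2 n p X shat k ≤ C * (k * Real.sqrt (Real.log p / n)) * σ ∧
          C * (k * Real.sqrt (Real.log p / n)) * σ ≤
            Real.log p * (k * Real.sqrt (Real.log p / n)) * shat) := by
  obtain ⟨N, hN⟩ := exists_nat_zquant_le (half_pos hα₁)
  set K₁ : ℝ := 7000 * M₁ ^ 2 * (5 * M₁ / 2) * (912 * (49 / 25) * 64 * M₁ ^ 2)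
  set K₂ : ℝ := 822 * (5 * M₁ / 2) * (912 * (49 / 25) * 64 * M₁ ^ 2)
  set B : ℝ := 1.01 * Real.sqrt (2 * M₁) * N + K₁
  have hB : 0 ≤ B := by positivity
  have hK₂ : 0 ≤ K₂ := by positivity
  refine ⟨(1 / (72 * M₁ * (1 + 1418 * M₁))) ^ 2, by positivity, 2 * (B + K₂), by positivity,
    ⌈Real.exp (2 * (2 * (B + K₂)))⌉₊, ?_⟩
  intro n p k X _ Ω hHerm hΩ ξ hξ β _ ε σ _ _ y _ lam _ bhat shat uhat hp₀ hlpn hlp2 hk hSL hU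
    hG1 _ hG3 hG4 _ _ hS2a hS2b hB1
  obtain ⟨j₀, -⟩ := Function.ne_iff.1 hξ
  have : Nonempty (Fin p) := ⟨j₀⟩
  have hn := pos_of_forall_lt_colNorm_div_sqrt (by positivity) fun j => (hG1 j).1
  obtain ⟨hC1, hC2⟩ := C1fun_le_and_C2fun_le hHerm hM₁ hΩ hn hG1
    (sqrt_mul_div_le (by linarith) (by positivity) (by positivity) hk) hG4
  have hq := quadForm_uhat_le hU (by linarith) hΩ hξ hB1 ((le_max_right _ _).trans hG3)
    (two_sqrt_add_two_mul_le_one hlpn)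
  have hρ₁ := rho1_le (K := K₁) hn hξ hSL.1.le hN N.cast_nonneg hq (by positivity) hC1
  have hρ₂ := rho2_le (K := K₂) hSL.1.le hC2
  have hlogC := le_log_of_ceil_exp_le hp₀
  have hr₁ : 0 ≤ l2 ξ * (1 / Real.sqrt n + k * Real.log p / n) :=
    mul_nonneg (l2_pos hξ).le (by positivity)
  have hr₂ : 0 ≤ (k : ℝ) * Real.sqrt (Real.log p / n) := by positivity
  refine ⟨?_, ?_, ?_, ?_⟩
  · linear_combination le_mul_mul_of_le_mul_mul (B := B) (C := 2 * (B + K₂)) hρ₁ hB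
      (by linarith) hr₁ hSL.1.le hS2a
  · linear_combination mul_mul_le_mul_mul (by positivity) hlogC hr₁ hSL.1.le hS2b
  · exact le_mul_mul_of_le_mul_mul hρ₂ hK₂ (by linarith) hr₂ hSL.1.le hS2a
  · exact mul_mul_le_mul_mul (by positivity) hlogC hr₂ hSL.1.le hS2b

/-- **Lemma (control of the radii `ρ₁(k)` and `ρ₂(k)`).**
On the events `(G₁)-(G₅)`, `(S₁)`, `(S₂)`, `(B₁)`, if `0 < σ ≤ M₂` and
`k ≤ c_* n / log p` for a sufficiently small constant `c_* > 0`, then there are a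
constant `C > 0` and an integer `p₀` (not depending on `X, y, β, ξ`) such that for all
`p ≥ p₀`:
`ρ₁(k) ≤ C ‖ξ‖₂ (1/√n + k log p / n) σ ≤ ‖ξ‖₂ log p (1/√n + k log p / n) σ̂` and
`ρ₂(k) ≤ C k √(log p / n) σ ≤ log p · k √(log p / n) σ̂`. -/
theorem radius_control
    (α M₁ M₂ : ℝ) (hα₁ : 0 < α) (hα₂ : α < 1 / 2) (hM₁ : 1 < M₁) (hM₂ : 0 < M₂) :
    ∃ cstar : ℝ, 0 < cstar ∧ ∃ C : ℝ, 0 < C ∧ ∃ p₀ : ℕ,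
      ∀ (n p k : ℕ) (X : Fin n → Fin p → ℝ) (hcols : ∀ j, ∃ i, X i j ≠ 0)
        (Ω : Matrix (Fin p) (Fin p) ℝ) (hHerm : Ω.IsHermitian)
        (hΩ : eigBounds Ω M₁)
        (ξ : Fin p → ℝ) (hξ : ξ ≠ 0)
        (β : Fin p → ℝ) (hβ : sparsity β ≤ k)
        (ε : Fin n → ℝ) (σ : ℝ) (hσ : 0 < σ) (hσM : σ ≤ M₂)
        (y : Fin n → ℝ) (hy : y = fun i => (∑ j, X i j * β j) + ε i)
        (lam : ℝ) (hlam : lam = (1 + 0.01) * Real.sqrt (2 * 1.0048 * Real.log p / n))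
        (bhat : Fin p → ℝ) (shat : ℝ) (uhat : Fin p → ℝ),
        p₀ ≤ p →
        Real.log p / n ≤ 1 / 25 → 2 < 1.0048 * Real.log p →
        (k : ℝ) ≤ cstar * n / Real.log p →
        IsScaledLasso n p lam X y bhat shat →
        IsUhat n p (12 * l2 ξ * M₁ ^ 2 * Real.sqrt (Real.log p / n)) ξ X uhat →
        -- event (G₁)
        (∀ j, 2 / (5 * Real.sqrt M₁) < colNorm n p X j / Real.sqrt n ∧
          colNorm n p X j / Real.sqrt n < 7 * Real.sqrt M₁ / 5) →
        -- event (G₂)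
        |(sigOra n p X y β) ^ 2 / σ ^ 2 - 1| ≤
          2 * Real.sqrt (Real.log p / n) + 2 * (Real.log p / n) →
        -- event (G₃)
        (max |(ξ ⬝ᵥ (Sigmahat n p X).mulVec ξ) / (ξ ⬝ᵥ (Ω⁻¹).mulVec ξ) - 1|
            |((Ω.mulVec ξ) ⬝ᵥ (Sigmahat n p X).mulVec (Ω.mulVec ξ)) /
                (ξ ⬝ᵥ Ω.mulVec ξ) - 1| ≤
          2 * Real.sqrt (Real.log p / n) + 2 * (Real.log p / n)) →
        -- event (G₄)
        (kappa n p X k (405 * (maxCol n p X / minCol n p X)) ≥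
          1 / (4 * Real.sqrt (⨆ i, hHerm.eigenvalues i)) -
            9 * (1 + 405 * (maxCol n p X / minCol n p X)) *
              Real.sqrt (k * Real.log p / n) /
                Real.sqrt (⨅ i, hHerm.eigenvalues i)) →
        -- event (G₅)
        vinf (fun j => (∑ i, Wmat n p X i j * ε i) / n) ≤
          σ * Real.sqrt (2 * 1.0048 * Real.log p / n) →
        -- event (S₁)
        vinf (fun j => (∑ i, Wmat n p X i j * ε i) / n) ≤
          sigOra n p X y β * lam * ((202 - 1) / (202 + 1)) *
            (1 - tau n p 202 lam X y β) →
        -- event (S₂)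
        (1 - 0.01) * shat ≤ σ → σ ≤ (1 + 0.01) * shat →
        -- event (B₁)
        vinf (fun j => Matrix.vecMul ξ (Ω * Sigmahat n p X) j - ξ j) ≤
          12 * l2 ξ * M₁ ^ 2 * Real.sqrt (Real.log p / n) →
        (rho1 n p α M₁ ξ X uhat shat k ≤
            C * l2 ξ * (1 / Real.sqrt n + k * Real.log p / n) * σ ∧
          C * l2 ξ * (1 / Real.sqrt n + k * Real.log p / n) * σ ≤
            l2 ξ * Real.log p * (1 / Real.sqrt n + k * Real.log p / n) * shat ∧
          rho2 n p X shat k ≤ C * (k * Real.sqrt (Real.log p / n)) * σ ∧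
          C * (k * Real.sqrt (Real.log p / n)) * σ ≤
            Real.log p * (k * Real.sqrt (Real.log p / n)) * shat) :=
  radius_control_general α M₁ M₂ hα₁ hM₁

end CIHD
end
end
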